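/- arXiv:2006.11192 — 5 statements merged into one kernel-verified Lean document; each statement's English description precedes it below -/
import Mathlib

section
/- Let A be an n×n real matrix and B an n×m real matrix. Suppose there exist a symmetric positive definite n×n real matrix Y and an m×n real matrix W such that A·Y + Y·Aᵀ + B·W + Wᵀ·Bᵀ is negative definite. Then with K = W·Y⁻¹, the closed-loop matrix A + B·K is Hurwitz. -/
open Matrix
open scoped Matrix

/-- A symmetric real matrix is negative definite if `xᵀ M x < 0` for all nonzero `x`. -/
def Matrix.NegDef {m : Type*} [Fintype m] (M : Matrix m m ℝ) : Prop :=
  M.IsSymm ∧ ∀ x : m → ℝ, x ≠ 0 → x ⬝ᵥ (M *ᵥ x) < 0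

/-- A real square matrix is Hurwitz if every eigenvalue of it, viewed as a complex
matrix, has strictly negative real part. -/
def IsHurwitz {n : ℕ} (A : Matrix (Fin n) (Fin n) ℝ) : Prop :=
  ∀ μ ∈ spectrum ℂ (A.map (Complex.ofReal : ℝ → ℂ)), μ.re < 0

/-!
With `M = A + B (W Y⁻¹)` the change of variables gives `M Y + Y Mᵀ = A Y + Y Aᵀ + B W + Wᵀ Bᵀ`,
so `Y` is a Lyapunov certificate for `Mᵀ`: if `Mᵀ v = μ v` with `v ≠ 0` complex, then
`v* (M Y + Y Mᵀ) v = 2 Re μ · v* Y v`, with the left side negative and `v* Y v` positive. Both signs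
come from the fact that a definite real quadratic form stays definite on `ℂⁿ`, its value at `a + i b`
being `aᵀ S a + bᵀ S b`. Finally `Mᵀ` and `M` have the same spectrum.
-/

open scoped ComplexOrder

namespace Matrix

variable {ι : Type*} [Fintype ι]

theorem IsSymm.star_dotProduct_map_ofReal_mulVec {S : Matrix ι ι ℝ} (hS : S.IsSymm)
    (v : ι → ℂ) :
    star v ⬝ᵥ (S.map Complex.ofReal *ᵥ v) =
      (((fun i ↦ (v i).re) ⬝ᵥ (S *ᵥ fun i ↦ (v i).re) +
        (fun i ↦ (v i).im) ⬝ᵥ (S *ᵥ fun i ↦ (v i).im) : ℝ) : ℂ) := by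
  apply Complex.ext
  · simp [dotProduct, mulVec, Complex.re_sum, Finset.mul_sum, Finset.sum_add_distrib]
  · rw [Complex.ofReal_im]
    simp only [dotProduct, Pi.star_apply, RCLike.star_def, mulVec, map_apply, Finset.mul_sum,
      Complex.im_sum, Complex.mul_im, Complex.conj_re, Complex.ofReal_re, Complex.ofReal_im,
      zero_mul, add_zero, Complex.conj_im, Complex.mul_re, sub_zero, neg_mul,
      Finset.sum_add_distrib, Finset.sum_neg_distrib]
    rw [add_neg_eq_zero, Finset.sum_comm]
    refine Finset.sum_congr rfl fun i _ ↦ Finset.sum_congr rfl fun j _ ↦ ?_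
    rw [hS.apply]
    ring

theorem PosDef.map_ofReal {S : Matrix ι ι ℝ} (hS : S.PosDef) :
    (S.map Complex.ofReal).PosDef := by
  have hSymm : S.IsSymm := isHermitian_iff_isSymm.mp hS.isHermitian
  have hquad (x : ι → ℝ) : 0 ≤ x ⬝ᵥ (S *ᵥ x) := by
    simpa using hS.posSemidef.dotProduct_mulVec_nonneg x
  have hquad_pos {x : ι → ℝ} (hx : x ≠ 0) : 0 < x ⬝ᵥ (S *ᵥ x) := by
    simpa using hS.dotProduct_mulVec_pos hx
  refine .of_dotProduct_mulVec_pos (hS.isHermitian.map _ fun x ↦ (Complex.conj_ofReal x).symm)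
    fun v hv ↦ ?_
  rw [hSymm.star_dotProduct_map_ofReal_mulVec, Complex.zero_lt_real]
  by_cases hre : (fun i ↦ (v i).re) = 0
  · have him : (fun i ↦ (v i).im) ≠ 0 := fun him ↦
      hv (funext fun i ↦ Complex.ext (congrFun hre i) (congrFun him i))
    exact add_pos_of_nonneg_of_pos (hquad _) (hquad_pos him)
  · exact add_pos_of_pos_of_nonneg (hquad_pos hre) (hquad _)

theorem NegDef.posDef_neg {N : Matrix ι ι ℝ} (hN : N.NegDef) : (-N).PosDef :=
  .of_dotProduct_mulVec_pos (isHermitian_iff_isSymm.mpr hN.1.neg) fun x hx ↦ by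
    simpa [neg_mulVec] using hN.2 x hx

variable [DecidableEq ι]

theorem spectrum_transpose {K : Type*} [Field K] (M : Matrix ι ι K) :
    spectrum K Mᵀ = spectrum K M := by
  ext μ
  simp only [mem_spectrum_iff_isRoot_charpoly, charpoly_transpose]

theorem re_lt_zero_of_mem_spectrum_of_posDef {𝕜 : Type*} [RCLike 𝕜] {M P : Matrix ι ι 𝕜}
    (hP : P.PosDef) (hQ : (-(Mᴴ * P + P * M)).PosDef) {μ : 𝕜} (hμ : μ ∈ spectrum 𝕜 M) :
    RCLike.re μ < 0 := by
  obtain ⟨v, hv⟩ := (Module.End.hasEigenvalue_iff_mem_spectrum (f := M.toLin').mpr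
    (by rwa [spectrum_toLin'])).exists_hasEigenvector
  have hMv : M *ᵥ v = μ • v := by simpa using hv.apply_eq_smul
  have hquad : star v ⬝ᵥ ((Mᴴ * P + P * M) *ᵥ v) =
      (2 * RCLike.re μ : ℝ) * (star v ⬝ᵥ (P *ᵥ v)) := by
    rw [add_mulVec, dotProduct_add, ← mulVec_mulVec, ← mulVec_mulVec, dotProduct_mulVec,
      ← star_mulVec, hMv, mulVec_smul, star_smul, smul_dotProduct, dotProduct_smul,
      smul_eq_mul, smul_eq_mul, ← add_mul, RCLike.star_def, add_comm, RCLike.add_conj]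
    push_cast
    ring
  by_contra! hre
  have := hQ.dotProduct_mulVec_pos hv.2
  rw [neg_mulVec, dotProduct_neg, hquad, lt_neg, neg_zero] at this
  exact this.not_ge (mul_nonneg (RCLike.ofReal_nonneg.mpr (by linarith))
    (hP.dotProduct_mulVec_pos hv.2).le)

theorem lyapunov_add_mul_mul_inv {R κ : Type*} [CommRing R] [Fintype κ] (A : Matrix ι ι R)
    (B : Matrix ι κ R) (W : Matrix κ ι R) {Y : Matrix ι ι R} (hY : IsUnit Y.det)
    (hYs : Y.IsSymm) :
    (A + B * (W * Y⁻¹)) * Y + Y * (A + B * (W * Y⁻¹))ᵀ = A * Y + Y * Aᵀ + B * W + Wᵀ * Bᵀ := by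
  rw [add_mul, Matrix.mul_assoc, Matrix.mul_assoc, nonsing_inv_mul Y hY, Matrix.mul_one,
    transpose_add, transpose_mul, transpose_mul, transpose_nonsing_inv, hYs.eq, Matrix.mul_add,
    ← Matrix.mul_assoc Y, ← Matrix.mul_assoc Y, mul_nonsing_inv Y hY, Matrix.one_mul]
  abel

end Matrix

/-- Feasibility of the stabilizability LMI yields a Hurwitz closed loop with `K = W Y⁻¹`. -/
theorem lmi_implies_hurwitz {n m : ℕ}
    (A : Matrix (Fin n) (Fin n) ℝ) (B : Matrix (Fin n) (Fin m) ℝ)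
    (Y : Matrix (Fin n) (Fin n) ℝ) (W : Matrix (Fin m) (Fin n) ℝ)
    (hY : Y.PosDef)
    (hLMI : (A * Y + Y * Aᵀ + B * W + Wᵀ * Bᵀ).NegDef) :
    IsHurwitz (A + B * (W * Y⁻¹)) := by
  set M := A + B * (W * Y⁻¹)
  have hYs : Y.IsSymm := isHermitian_iff_isSymm.mp hY.isHermitian
  have hLyap : M * Y + Y * Mᵀ = A * Y + Y * Aᵀ + B * W + Wᵀ * Bᵀ :=
    lyapunov_add_mul_mul_inv A B W ((isUnit_iff_isUnit_det Y).mp hY.isUnit) hYs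
  have hmap : -((Mᵀ.map Complex.ofReal)ᴴ * Y.map Complex.ofReal +
      Y.map Complex.ofReal * Mᵀ.map Complex.ofReal) = (-(M * Y + Y * Mᵀ)).map Complex.ofReal := by
    ext i j
    simp [Matrix.mul_apply]
  intro μ hμ
  rw [← spectrum_transpose, ← transpose_map] at hμ
  refine re_lt_zero_of_mem_spectrum_of_posDef hY.map_ofReal ?_ hμ
  rw [hmap]
  exact (hLyap ▸ hLMI).posDef_neg.map_ofReal
end

section
/- Let A be an n×n real matrix, B an n×m real matrix, and K an m×n real matrix such that A + B·K is Hurwitz. Then there exist a symmetric positive definite n×n real matrix Y and an m×n real matrix W with W = K·Y such that A·Y + Y·Aᵀ + B·W + Wᵀ·Bᵀ is negative definite. -/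
/-!
Put `M = A + B K`. As `1` is not an eigenvalue of `M`, the Cayley transform
`S = (1 - M)⁻¹ (1 + M)` exists, and for each eigenvalue `μ` of `S` the number `(μ - 1) / (μ + 1)`
is an eigenvalue of `M`; its real part is negative exactly when `|μ| < 1`. By Gelfand's formula
the powers of `S` then decay geometrically, so `P = ∑ₖ Sᵏ (Sᵏ)ᵀ` converges. It is positive definite
and solves the Stein equation `P = 1 + S P Sᵀ`, and conjugating this equation by `1 - M` gives the
Lyapunov equation `M (2P) + (2P) Mᵀ = -(1 - M)(1 - M)ᵀ`, whose right side is negative definite.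
Finally `Y = 2P` and `W = K Y` solve the LMI, because `B W + Wᵀ Bᵀ = (B K) Y + Y (B K)ᵀ`.
-/

open Matrix
open scoped Matrix

theorem Complex.norm_lt_one_of_re_div_neg {μ : ℂ} (h : ((μ - 1) / (μ + 1)).re < 0) : ‖μ‖ < 1 := by
  have hre : ((μ - 1) / (μ + 1)).re = (normSq μ - 1) / normSq (μ + 1) := by
    rw [div_re, ← add_div, normSq_apply, normSq_apply]
    congr 1
    simp only [sub_re, add_re, one_re, sub_im, add_im, one_im]
    ring
  have hnum : normSq μ - 1 < 0 := by
    rw [hre] at h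
    exact neg_of_div_neg_left h (normSq_nonneg _)
  rw [← sq_lt_one_iff₀ (norm_nonneg μ), ← normSq_eq_norm_sq]
  linarith

theorem spectrum.div_mem_of_mem_cayley {𝕜 A : Type*} [Field 𝕜] [NeZero (2 : 𝕜)] [Ring A]
    [Algebra 𝕜 A] {a c : A} (ha : IsUnit (1 - a)) (hc : (1 - a) * c = 1 + a) {μ : 𝕜}
    (hμ : μ ∈ spectrum 𝕜 c) : μ + 1 ≠ 0 ∧ (μ - 1) / (μ + 1) ∈ spectrum 𝕜 a := by
  have hfactor : (1 - a) * (algebraMap 𝕜 A μ - c) = algebraMap 𝕜 A (μ - 1) - (μ + 1) • a := by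
    simp only [mul_sub, hc, Algebra.algebraMap_eq_smul_one, mul_smul_comm, mul_one, sub_smul,
      add_smul, one_smul, smul_sub]
    abel
  rw [spectrum.mem_iff, ← ha.unit.isUnit_units_mul, IsUnit.unit_spec, hfactor] at hμ
  have hμ1 : μ + 1 ≠ 0 := by
    rintro h
    rw [h, zero_smul, sub_zero, show μ - 1 = -2 by linear_combination h] at hμ
    exact hμ ((isUnit_iff_ne_zero.mpr (neg_ne_zero.mpr two_ne_zero)).map _)
  refine ⟨hμ1, spectrum.mem_iff.mpr fun hunit => hμ ?_⟩
  have hscale : algebraMap 𝕜 A (μ - 1) - (μ + 1) • a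
      = algebraMap 𝕜 A (μ + 1) * (algebraMap 𝕜 A ((μ - 1) / (μ + 1)) - a) := by
    rw [mul_sub, ← map_mul, mul_div_cancel₀ _ hμ1, Algebra.smul_def]
  rw [hscale]
  exact ((isUnit_iff_ne_zero.mpr hμ1).map _).mul hunit

open Filter in
theorem spectrum.summable_norm_pow_of_spectralRadius_lt_one {A : Type*} [NormedRing A]
    [NormedAlgebra ℂ A] [CompleteSpace A] {a : A} (ha : spectralRadius ℂ a < 1) :
    Summable fun k : ℕ => ‖a ^ k‖ := by
  obtain ⟨r, hρr, hr1⟩ := ENNReal.lt_iff_exists_nnreal_btwn.mp ha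
  refine .of_norm_bounded_eventually_nat (summable_geometric_of_lt_one r.2 (mod_cast hr1)) ?_
  filter_upwards [(pow_norm_pow_one_div_tendsto_nhds_spectralRadius a).eventually
    (gt_mem_nhds hρr), eventually_gt_atTop 0] with k hk hk0
  rw [ENNReal.ofReal_lt_coe_iff (by positivity), one_div] at hk
  rw [norm_norm]
  exact_mod_cast
    ((Real.rpow_inv_lt_iff_of_pos (norm_nonneg _) r.coe_nonneg (Nat.cast_pos.mpr hk0)).mp hk).le

namespace Matrix

variable {ι : Type*} [Fintype ι]

section

variable {R : Type*} [CommRing R] [PartialOrder R] [StarRing R] [TopologicalSpace R]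
  [IsTopologicalRing R] [ContinuousStar R] [OrderClosedTopology R]

theorem isClosed_setOf_posSemidef : IsClosed {A : Matrix ι ι R | A.PosSemidef} := by
  simp only [posSemidef_iff_dotProduct_mulVec, Set.ofPred_and, Set.ofPred_forall]
  refine .inter (isClosed_eq continuous_id.matrix_conjTranspose continuous_id) ?_
  exact isClosed_iInter fun x => isClosed_le continuous_const
    (continuous_const.dotProduct (continuous_id.matrix_mulVec continuous_const))

theorem posSemidef_tsum [AddLeftMono R] {κ : Type*} {f : κ → Matrix ι ι R}
    (hf : ∀ k, (f k).PosSemidef) : (∑' k, f k).PosSemidef := by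
  by_cases hs : Summable f
  · exact isClosed_setOf_posSemidef.mem_of_tendsto hs.hasSum
      (.of_forall fun s => posSemidef_sum s fun k _ => hf k)
  · rw [tsum_eq_zero_of_not_summable hs]
    exact .zero

end

theorem PosDef.negDef_neg {G : Matrix ι ι ℝ} (hG : G.PosDef) : (-G).NegDef := by
  refine ⟨?_, fun x hx => ?_⟩
  · rw [IsSymm, transpose_neg, ← conjTranspose_eq_transpose_of_trivial, hG.isHermitian.eq]
  · simpa [neg_mulVec] using hG.dotProduct_mulVec_pos hx

variable [DecidableEq ι]

theorem tsum_pow_mul_pow_transpose_eq_one_add {R : Type*} [CommRing R] [TopologicalSpace R]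
    [IsTopologicalRing R] [T2Space R] {S : Matrix ι ι R}
    (hS : Summable fun k : ℕ => S ^ k * (S ^ k)ᵀ) :
    ∑' k : ℕ, S ^ k * (S ^ k)ᵀ = 1 + S * (∑' k : ℕ, S ^ k * (S ^ k)ᵀ) * Sᵀ := by
  have hshift : ∀ k : ℕ, S ^ (k + 1) * (S ^ (k + 1))ᵀ = S * (S ^ k * (S ^ k)ᵀ) * Sᵀ := by
    intro k
    rw [pow_succ', transpose_mul, Matrix.mul_assoc, Matrix.mul_assoc, Matrix.mul_assoc]
  conv_lhs => rw [hS.tsum_eq_zero_add, pow_zero, transpose_one, Matrix.one_mul]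
  simp only [hshift]
  rw [(hS.mul_left S).tsum_mul_right, hS.tsum_mul_left]

theorem posDef_tsum_pow_mul_pow_transpose {S : Matrix ι ι ℝ}
    (hS : Summable fun k : ℕ => S ^ k * (S ^ k)ᵀ) : (∑' k : ℕ, S ^ k * (S ^ k)ᵀ).PosDef := by
  have hpsd : ∀ X : Matrix ι ι ℝ, (X * Xᵀ).PosSemidef := fun X => by
    simpa only [conjTranspose_eq_transpose_of_trivial] using posSemidef_self_mul_conjTranspose X
  rw [tsum_pow_mul_pow_transpose_eq_one_add hS]
  refine PosDef.one.add_posSemidef ?_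
  simpa only [conjTranspose_eq_transpose_of_trivial] using
    (posSemidef_tsum fun k => hpsd (S ^ k)).mul_mul_conjTranspose_same S

open scoped Matrix.Norms.Frobenius in
theorem summable_pow_mul_pow_transpose {S : Matrix ι ι ℝ}
    (hS : spectralRadius ℂ (S.map Complex.ofReal) < 1) :
    Summable fun k : ℕ => S ^ k * (S ^ k)ᵀ := by
  have hnorm : Summable fun k : ℕ => ‖S ^ k‖ := by
    refine (spectrum.summable_norm_pow_of_spectralRadius_lt_one hS).congr fun k => ?_
    change ‖S.map Complex.ofRealHom ^ k‖ = _
    rw [← Matrix.map_pow]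
    exact frobenius_norm_map_eq _ _ fun x => Complex.norm_real x
  refine .of_norm_bounded (hnorm.mul_left (∑' j, ‖S ^ j‖)) fun k => ?_
  calc ‖S ^ k * (S ^ k)ᵀ‖ ≤ ‖S ^ k‖ * ‖(S ^ k)ᵀ‖ := frobenius_norm_mul _ _
    _ = ‖S ^ k‖ * ‖S ^ k‖ := by rw [frobenius_norm_transpose]
    _ ≤ (∑' j, ‖S ^ j‖) * ‖S ^ k‖ :=
      mul_le_mul_of_nonneg_right (hnorm.le_tsum k fun j _ => norm_nonneg _) (norm_nonneg _)

theorem mul_add_mul_transpose_eq_of_stein {R : Type*} [CommRing R] {M S P : Matrix ι ι R}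
    (hS : (1 - M) * S = 1 + M) (hP : P = 1 + S * P * Sᵀ) :
    M * ((2 : R) • P) + ((2 : R) • P) * Mᵀ = -((1 - M) * (1 - M)ᵀ) := by
  have hconj : (1 - M) * P * (1 - M)ᵀ = (1 - M) * (1 - M)ᵀ + (1 + M) * P * (1 + M)ᵀ := by
    conv_lhs => rw [hP]
    rw [Matrix.mul_add, Matrix.add_mul, Matrix.mul_one, ← hS, transpose_mul]
    simp only [Matrix.mul_assoc]
  rw [eq_sub_of_add_eq hconj.symm]
  simp only [transpose_sub, transpose_add, transpose_one, two_smul]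
  noncomm_ring

end Matrix

namespace IsHurwitz

variable {n : ℕ} {M : Matrix (Fin n) (Fin n) ℝ}

theorem isUnit_one_sub_map (hM : IsHurwitz M) : IsUnit (1 - M.map Complex.ofReal) := by
  have h1 : (1 : ℂ) ∉ spectrum ℂ (M.map Complex.ofReal) := fun h => (hM 1 h).not_ge (by norm_num)
  simpa [spectrum.mem_iff] using h1

theorem isUnit_one_sub (hM : IsHurwitz M) : IsUnit (1 - M) := by
  have hmap : Complex.ofRealHom.mapMatrix (1 - M) = 1 - M.map Complex.ofReal := by
    rw [map_sub, map_one]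
    rfl
  have hc := hM.isUnit_one_sub_map
  rw [← hmap, isUnit_iff_isUnit_det, ← RingHom.map_det, isUnit_map_iff] at hc
  exact (isUnit_iff_isUnit_det _).mpr hc

open scoped Matrix.Norms.Frobenius in
theorem spectralRadius_cayley_lt_one (hM : IsHurwitz M) {S : Matrix (Fin n) (Fin n) ℝ}
    (hS : (1 - M) * S = 1 + M) : spectralRadius ℂ (S.map Complex.ofReal) < 1 := by
  have hSc : (1 - M.map Complex.ofReal) * S.map Complex.ofReal = 1 + M.map Complex.ofReal := by
    have hmap := congrArg Complex.ofRealHom.mapMatrix hS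
    rwa [map_mul, map_sub, map_add, map_one] at hmap
  have hlt : ∀ μ ∈ spectrum ℂ (S.map Complex.ofReal), ‖μ‖₊ < 1 := fun μ hμ =>
    Complex.norm_lt_one_of_re_div_neg
      (hM _ (spectrum.div_mem_of_mem_cayley hM.isUnit_one_sub_map hSc hμ).2)
  rcases (spectrum ℂ (S.map Complex.ofReal)).eq_empty_or_nonempty with h | h
  · simp [spectralRadius, h]
  · exact_mod_cast spectrum.spectralRadius_lt_of_forall_lt_of_nonempty h hlt

theorem exists_posDef_lyapunov (hM : IsHurwitz M) :
    ∃ Y : Matrix (Fin n) (Fin n) ℝ, Y.PosDef ∧ (M * Y + Y * Mᵀ).NegDef := by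
  have hN := hM.isUnit_one_sub
  set S := (1 - M)⁻¹ * (1 + M)
  have hS : (1 - M) * S = 1 + M :=
    mul_nonsing_inv_cancel_left _ _ ((isUnit_iff_isUnit_det _).mp hN)
  have hsum := Matrix.summable_pow_mul_pow_transpose (hM.spectralRadius_cayley_lt_one hS)
  refine ⟨(2 : ℝ) • ∑' k : ℕ, S ^ k * (S ^ k)ᵀ,
    (Matrix.posDef_tsum_pow_mul_pow_transpose hsum).smul two_pos, ?_⟩
  rw [mul_add_mul_transpose_eq_of_stein hS
    (Matrix.tsum_pow_mul_pow_transpose_eq_one_add hsum)]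
  refine PosDef.negDef_neg ?_
  simpa only [conjTranspose_eq_transpose_of_trivial] using
    PosDef.mul_conjTranspose_self (1 - M) (vecMul_injective_iff_isUnit.mpr hN)

end IsHurwitz

/-- If `A + B K` is Hurwitz, the stabilizability LMI is feasible with `W = K Y`. -/
theorem hurwitz_implies_lmi {n m : ℕ}
    (A : Matrix (Fin n) (Fin n) ℝ) (B : Matrix (Fin n) (Fin m) ℝ)
    (K : Matrix (Fin m) (Fin n) ℝ)
    (hK : IsHurwitz (A + B * K)) :
    ∃ (Y : Matrix (Fin n) (Fin n) ℝ) (W : Matrix (Fin m) (Fin n) ℝ),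
      Y.PosDef ∧ W = K * Y ∧
      (A * Y + Y * Aᵀ + B * W + Wᵀ * Bᵀ).NegDef := by
  obtain ⟨Y, hY, hlyap⟩ := hK.exists_posDef_lyapunov
  refine ⟨Y, K * Y, hY, rfl, ?_⟩
  have hYt : Yᵀ = Y := by rw [← conjTranspose_eq_transpose_of_trivial, hY.isHermitian.eq]
  convert hlyap using 1
  simp only [transpose_mul, hYt, transpose_add, Matrix.add_mul, Matrix.mul_add, Matrix.mul_assoc]
  abel
end

section
/- Let A be an n×n real matrix, B_u an n×m real matrix, Y a symmetric positive definite n×n real matrix, W an m×n real matrix, Q a symmetric positive semidefinite n×n real matrix, and R a symmetric positive semidefinite m×m real matrix. If the symmetric matrix A·Y + Y·Aᵀ + B_u·W + Wᵀ·B_uᵀ + Y·Q·Y + Wᵀ·R·W is negative definite, then the gain K = W·Y⁻¹ makes the closed-loop matrix A + B_u·K Hurwitz. -/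
open Matrix
open scoped Matrix

/-!
Let `A_cl = A + B_u W Y⁻¹` and `S = A_cl Y + Y A_clᵀ`. Since `A_cl Y = A Y + B_u W`, the matrix `S`
is the LMI matrix minus the positive semidefinite `Y Q Y + Wᵀ R W`, so `-S ≻ 0`. This is a
Lyapunov inequality: if `w` is a left eigenvector of `A_cl` for `μ`, then
`w* S w = 2 Re μ · w* Y w` with `w* Y w > 0` and `w* S w < 0`, whence `Re μ < 0`.
-/

open scoped ComplexOrder

namespace Matrix

variable {ι : Type*} [Fintype ι]

theorem exists_mulVec_eq_smul_of_mem_spectrum {K : Type*} [Field K] [DecidableEq ι]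
    {A : Matrix ι ι K} {μ : K} (h : μ ∈ spectrum K A) : ∃ v ≠ 0, A *ᵥ v = μ • v := by
  rw [← spectrum_toLin', ← Module.End.hasEigenvalue_iff_mem_spectrum] at h
  obtain ⟨v, hv⟩ := h.exists_hasEigenvector
  exact ⟨v, hv.2, by simpa using hv.apply_eq_smul⟩

theorem re_lt_zero_of_mem_spectrum_of_lyapunov {𝕜 : Type*} [RCLike 𝕜] [DecidableEq ι]
    {A Y : Matrix ι ι 𝕜} (hY : Y.PosDef) (hAY : (-(A * Y + Y * Aᴴ)).PosDef) {μ : 𝕜}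
    (hμ : μ ∈ spectrum 𝕜 A) : RCLike.re μ < 0 := by
  obtain ⟨w, hw0, hw⟩ : ∃ w ≠ 0, Aᴴ *ᵥ w = star μ • w := by
    refine exists_mulVec_eq_smul_of_mem_spectrum ?_
    rwa [← star_eq_conjTranspose, spectrum.map_star, Set.mem_star, star_star]
  have hleft : star w ᵥ* A = μ • star w := by
    simpa [star_mulVec] using congrArg star hw
  have hform : star w ⬝ᵥ (-(A * Y + Y * Aᴴ)) *ᵥ w =
      ((-(2 * RCLike.re μ) : ℝ) : 𝕜) * (star w ⬝ᵥ Y *ᵥ w) := by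
    rw [neg_mulVec, add_mulVec, ← mulVec_mulVec, ← mulVec_mulVec, hw, dotProduct_neg,
      dotProduct_add, dotProduct_mulVec, hleft, mulVec_smul, dotProduct_smul, smul_dotProduct,
      smul_eq_mul, smul_eq_mul]
    push_cast
    rw [← RCLike.add_conj, ← RCLike.star_def]
    ring
  have hS := hAY.dotProduct_mulVec_pos hw0
  rw [hform] at hS
  rcases (RCLike.ofReal_mul_pos_iff _ _).1 hS with ⟨-, hq_neg⟩ | ⟨hre, -⟩
  · exact absurd (hY.dotProduct_mulVec_pos hw0) (not_lt_of_gt hq_neg)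
  · linarith

theorem re_star_dotProduct_map_ofReal_mulVec (M : Matrix ι ι ℝ) (v : ι → ℂ) :
    (star v ⬝ᵥ M.map Complex.ofReal *ᵥ v).re =
      (fun i ↦ (v i).re) ⬝ᵥ M *ᵥ (fun i ↦ (v i).re) +
        (fun i ↦ (v i).im) ⬝ᵥ M *ᵥ (fun i ↦ (v i).im) := by
  simp only [dotProduct, mulVec, map_apply, Pi.star_apply, Finset.mul_sum, Complex.re_sum,
    ← Finset.sum_add_distrib]
  refine Finset.sum_congr rfl fun i _ ↦ Finset.sum_congr rfl fun j _ ↦ ?_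
  simp only [Complex.mul_re, Complex.mul_im, Complex.star_def, Complex.conj_re, Complex.conj_im,
    Complex.ofReal_re, Complex.ofReal_im]
  ring

theorem PosDef.map_ofReal_s5 {M : Matrix ι ι ℝ} (hM : M.PosDef) : (M.map Complex.ofReal).PosDef := by
  have hherm : (M.map Complex.ofReal).IsHermitian := hM.isHermitian.map _ fun _ ↦ by simp
  refine .of_dotProduct_mulVec_pos hherm fun v hv ↦
    RCLike.pos_iff.2 ⟨?_, hherm.im_star_dotProduct_mulVec_self v⟩
  have hnonneg (x : ι → ℝ) : 0 ≤ x ⬝ᵥ M *ᵥ x := by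
    simpa using hM.posSemidef.dotProduct_mulVec_nonneg x
  have hpos {x : ι → ℝ} (hx : x ≠ 0) : 0 < x ⬝ᵥ M *ᵥ x := by
    simpa using hM.dotProduct_mulVec_pos hx
  rw [RCLike.re_to_complex, re_star_dotProduct_map_ofReal_mulVec]
  by_cases hre : (fun i ↦ (v i).re) = 0
  · have him : (fun i ↦ (v i).im) ≠ 0 := fun him ↦
      hv (funext fun i ↦ Complex.ext (congrFun hre i) (congrFun him i))
    exact add_pos_of_nonneg_of_pos (hnonneg _) (hpos him)
  · exact add_pos_of_pos_of_nonneg (hpos hre) (hnonneg _)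

theorem re_lt_zero_of_mem_spectrum_map_ofReal_of_lyapunov [DecidableEq ι] {A Y : Matrix ι ι ℝ}
    (hY : Y.PosDef) (hAY : (-(A * Y + Y * Aᵀ)).PosDef) {μ : ℂ}
    (hμ : μ ∈ spectrum ℂ (A.map Complex.ofReal)) : μ.re < 0 := by
  have hmap : (-(A * Y + Y * Aᵀ)).map Complex.ofReal =
      -(A.map Complex.ofReal * Y.map Complex.ofReal +
        Y.map Complex.ofReal * (A.map Complex.ofReal)ᴴ) := by
    ext i j
    simp [mul_apply]
  have hAYc := hAY.map_ofReal_s5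
  rw [hmap] at hAYc
  exact re_lt_zero_of_mem_spectrum_of_lyapunov hY.map_ofReal_s5 hAYc hμ

theorem NegDef.posDef_neg_s5 {M : Matrix ι ι ℝ} (hM : M.NegDef) : (-M).PosDef :=
  .of_dotProduct_mulVec_pos (isHermitian_iff_isSymm.2 hM.1).neg fun x hx ↦ by
    simpa [neg_mulVec] using hM.2 x hx

theorem closedLoop_mul_add_mul_transpose {κ α : Type*} [Fintype κ] [DecidableEq ι] [CommRing α]
    (A Y : Matrix ι ι α) (B : Matrix ι κ α) (W : Matrix κ ι α) (hY : Y.IsSymm)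
    (hdet : IsUnit Y.det) :
    (A + B * (W * Y⁻¹)) * Y + Y * (A + B * (W * Y⁻¹))ᵀ = A * Y + Y * Aᵀ + B * W + Wᵀ * Bᵀ := by
  have hclosed : (A + B * (W * Y⁻¹)) * Y = A * Y + B * W := by
    rw [add_mul, Matrix.mul_assoc, Matrix.mul_assoc, nonsing_inv_mul _ hdet, Matrix.mul_one]
  rw [← hY.eq, ← transpose_mul, hY.eq, hclosed, transpose_add, transpose_mul, transpose_mul, hY.eq]
  abel

end Matrix

/-- Feasibility of the LQR LMI yields a stabilizing gain `K = W Y⁻¹`. -/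
theorem lqr_lmi_implies_hurwitz {n m : ℕ}
    (A : Matrix (Fin n) (Fin n) ℝ) (Bu : Matrix (Fin n) (Fin m) ℝ)
    (Y : Matrix (Fin n) (Fin n) ℝ) (W : Matrix (Fin m) (Fin n) ℝ)
    (Q : Matrix (Fin n) (Fin n) ℝ) (R : Matrix (Fin m) (Fin m) ℝ)
    (hY : Y.PosDef) (hQ : Q.PosSemidef) (hR : R.PosSemidef)
    (hLMI : (A * Y + Y * Aᵀ + Bu * W + Wᵀ * Buᵀ + Y * Q * Y + Wᵀ * R * W).NegDef) :
    IsHurwitz (A + Bu * (W * Y⁻¹)) := by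
  have hYsymm : Y.IsSymm := isHermitian_iff_isSymm.1 hY.isHermitian
  have hcost : (Y * Q * Y + Wᵀ * R * W).PosSemidef := by
    have := (hQ.mul_mul_conjTranspose_same Y).add (hR.conjTranspose_mul_mul_same W)
    rwa [hY.isHermitian.eq, conjTranspose_eq_transpose_of_trivial] at this
  intro μ hμ
  refine re_lt_zero_of_mem_spectrum_map_ofReal_of_lyapunov hY ?_ hμ
  rw [closedLoop_mul_add_mul_transpose _ _ _ _ hYsymm ((isUnit_iff_isUnit_det _).1 hY.isUnit)]
  convert hLMI.posDef_neg_s5.add_posSemidef hcost using 1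
  abel
end

section
/- Let A be an n×n real matrix, B_u an n×m real matrix, Y a symmetric positive definite n×n real matrix, W an m×n real matrix, Q a symmetric positive semidefinite n×n real matrix, and R a symmetric positive semidefinite m×m real matrix, and suppose the symmetric matrix A·Y + Y·Aᵀ + B_u·W + Wᵀ·B_uᵀ + Y·Q·Y + Wᵀ·R·W is negative definite. Set K = W·Y⁻¹ and A_cl = A + B_u·K. Then for every initial state x₀ ∈ ℝⁿ, the quadratic cost of the closed-loop trajectory x(t) = exp(t·A_cl)·x₀ satisfies ∫₀^∞ x₀ᵀ · exp(t·A_clᵀ) · (Q + Kᵀ·R·K) · exp(t·A_cl) · x₀ dt ≤ x₀ᵀ · Y⁻¹ · x₀. -/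
open Matrix MeasureTheory
open scoped Matrix

/-!
With `P = Y⁻¹` and `K = W Y⁻¹`, the congruence `P (·) P` turns the LMI into the Lyapunov
inequality `A_clᵀ P + P A_cl + Q + Kᵀ R K ≤ 0`. Along `x(t) = exp(t A_cl) x₀` the storage
function `V(t) = x(t)ᵀ P x(t) ≥ 0` therefore satisfies `V' ≤ -(xᵀ Q x + uᵀ R u) ≤ 0`, so the
cost accumulated on `[0, T]` is at most `V(0) - V(T) ≤ x₀ᵀ P x₀`. A nonnegative integrand with
uniformly bounded partial integrals is integrable on `(0, ∞)`, with the same bound.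
-/

open NormedSpace Set

theorem intervalIntegral_le_of_hasDerivAt_of_le_neg {c V V' : ℝ → ℝ} {a b : ℝ} (hab : a ≤ b)
    (hc : IntegrableOn c (Icc a b)) (hV0 : 0 ≤ V b) (hV : ∀ t, HasDerivAt V (V' t) t)
    (hcV : ∀ t, c t ≤ -V' t) :
    ∫ t in a..b, c t ≤ V a := by
  have hFTC : ∫ t in a..b, c t ≤ (-V) b - (-V) a :=
    intervalIntegral.integral_le_sub_of_hasDeriv_right_of_le hab
      (fun t _ => (hV t).continuousAt.neg.continuousWithinAt)
      (fun t _ => (hV t).neg.hasDerivWithinAt) hc (fun t _ => hcV t)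
  simp only [Pi.neg_apply] at hFTC
  linarith

theorem integrableOn_Ioi_and_setIntegral_le_of_intervalIntegral_le {c : ℝ → ℝ} {a C : ℝ}
    (hc : ∀ b, IntegrableOn c (Ioc a b)) (hc0 : ∀ t, 0 ≤ c t)
    (hC : ∀ b, a ≤ b → ∫ t in a..b, c t ≤ C) :
    IntegrableOn c (Ioi a) ∧ ∫ t in Ioi a, c t ≤ C := by
  have hint : IntegrableOn c (Ioi a) := by
    refine integrableOn_Ioi_of_intervalIntegral_norm_bounded C a hc
      Filter.tendsto_id ?_
    filter_upwards [Filter.eventually_ge_atTop a] with b hb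
    simpa only [id, Real.norm_of_nonneg (hc0 _)] using hC b hb
  refine ⟨hint, le_of_tendsto (intervalIntegral_tendsto_integral_Ioi a hint Filter.tendsto_id) ?_⟩
  filter_upwards [Filter.eventually_ge_atTop a] with b hb using hC b hb

theorem dotProduct_transpose_mul_mul_mulVec {R l m : Type*} [CommSemiring R] [Fintype l]
    [Fintype m] (E : Matrix l m R) (M : Matrix l l R) (x : m → R) :
    x ⬝ᵥ ((Eᵀ * M * E) *ᵥ x) = (E *ᵥ x) ⬝ᵥ (M *ᵥ (E *ᵥ x)) := by
  rw [Matrix.mul_assoc, ← mulVec_mulVec, dotProduct_mulVec, vecMul_transpose, mulVec_mulVec]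

theorem Matrix.NegDef.dotProduct_mulVec_nonpos {m : Type*} [Fintype m] {M : Matrix m m ℝ}
    (hM : M.NegDef) (x : m → ℝ) : x ⬝ᵥ (M *ᵥ x) ≤ 0 := by
  rcases eq_or_ne x 0 with rfl | hx
  · simp
  · exact (hM.2 x hx).le

section ClosedLoop

variable {ι : Type*} [Fintype ι]

noncomputable def quadFormCLM (x : ι → ℝ) : Matrix ι ι ℝ →L[ℝ] ℝ :=
  LinearMap.toContinuousLinearMap
    { toFun := fun M => x ⬝ᵥ (M *ᵥ x)
      map_add' := fun M N => by simp [add_mulVec, dotProduct_add]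
      map_smul' := fun c M => by simp [smul_mulVec] }

variable [DecidableEq ι]

attribute [local instance] Matrix.linftyOpNormedRing Matrix.linftyOpNormedAlgebra

theorem hasDerivAt_dotProduct_exp_transpose_mul_mul_exp (A P : Matrix ι ι ℝ) (x : ι → ℝ)
    (t : ℝ) :
    HasDerivAt (fun s : ℝ => x ⬝ᵥ ((exp (s • Aᵀ) * P * exp (s • A)) *ᵥ x))
      (x ⬝ᵥ ((exp (t • Aᵀ) * (Aᵀ * P + P * A) * exp (t • A)) *ᵥ x)) t := by
  have hprod := ((hasDerivAt_exp_smul_const Aᵀ t).mul_const P).mul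
    (hasDerivAt_exp_smul_const' A t)
  have hsum : exp (t • Aᵀ) * Aᵀ * P * exp (t • A) + exp (t • Aᵀ) * P * (A * exp (t • A)) =
      exp (t • Aᵀ) * (Aᵀ * P + P * A) * exp (t • A) := by noncomm_ring
  exact ((quadFormCLM x).hasFDerivAt.comp_hasDerivAt t hprod).congr_deriv (by rw [← hsum]; rfl)

theorem integrableOn_and_setIntegral_le_of_lyapunov (A P S : Matrix ι ι ℝ)
    (hP : P.PosSemidef) (hS : S.PosSemidef)
    (hLyap : ∀ x, x ⬝ᵥ ((Aᵀ * P + P * A + S) *ᵥ x) ≤ 0) (x₀ : ι → ℝ) :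
    IntegrableOn (fun t : ℝ => x₀ ⬝ᵥ ((exp (t • Aᵀ) * S * exp (t • A)) *ᵥ x₀)) (Ioi 0) ∧
    ∫ t in Ioi (0 : ℝ), x₀ ⬝ᵥ ((exp (t • Aᵀ) * S * exp (t • A)) *ᵥ x₀) ≤ x₀ ⬝ᵥ (P *ᵥ x₀) := by
  have hexp : ∀ t : ℝ, exp (t • Aᵀ) = (exp (t • A))ᵀ := fun t => by
    rw [← transpose_smul, Matrix.exp_transpose]
  have hquad : ∀ (M : Matrix ι ι ℝ) (t : ℝ), x₀ ⬝ᵥ ((exp (t • Aᵀ) * M * exp (t • A)) *ᵥ x₀) =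
      (exp (t • A) *ᵥ x₀) ⬝ᵥ (M *ᵥ (exp (t • A) *ᵥ x₀)) := fun M t => by
    rw [hexp, dotProduct_transpose_mul_mul_mulVec]
  have hcont : Continuous fun t : ℝ => x₀ ⬝ᵥ ((exp (t • Aᵀ) * S * exp (t • A)) *ᵥ x₀) :=
    (quadFormCLM x₀).continuous.comp (by fun_prop)
  refine integrableOn_Ioi_and_setIntegral_le_of_intervalIntegral_le
    (fun _ => hcont.integrableOn_Ioc)
    (fun t => by rw [hquad]; simpa only [star_trivial] using hS.dotProduct_mulVec_nonneg _)
    fun b hb => ?_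
  convert intervalIntegral_le_of_hasDerivAt_of_le_neg hb hcont.integrableOn_Icc
    (by rw [hquad]; simpa only [star_trivial] using hP.dotProduct_mulVec_nonneg _)
    (hasDerivAt_dotProduct_exp_transpose_mul_mul_exp A P x₀) fun t => ?_ using 1
  · simp
  · rw [le_neg_iff_add_nonpos_left, hquad, hquad, ← dotProduct_add, ← add_mulVec]
    exact hLyap _

end ClosedLoop

theorem inv_mul_lmi_mul_inv {ι μ : Type*} [Fintype ι] [DecidableEq ι] [Fintype μ]
    (A Y Q : Matrix ι ι ℝ) (Bu : Matrix ι μ ℝ) (W : Matrix μ ι ℝ) (R : Matrix μ μ ℝ)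
    (hY : IsUnit Y.det) (hYs : Yᵀ = Y) :
    Y⁻¹ * (A * Y + Y * Aᵀ + Bu * W + Wᵀ * Buᵀ + Y * Q * Y + Wᵀ * R * W) * Y⁻¹ =
      (A + Bu * (W * Y⁻¹))ᵀ * Y⁻¹ + Y⁻¹ * (A + Bu * (W * Y⁻¹)) +
        (Q + (W * Y⁻¹)ᵀ * R * (W * Y⁻¹)) := by
  have hYinv : ∀ Z : Matrix ι ι ℝ, Y⁻¹ * (Y * Z) = Z := fun Z => by
    rw [← Matrix.mul_assoc, nonsing_inv_mul Y hY, Matrix.one_mul]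
  simp only [transpose_add, transpose_mul, transpose_nonsing_inv, hYs, Matrix.mul_add,
    Matrix.add_mul, Matrix.mul_assoc, mul_nonsing_inv Y hY, Matrix.mul_one, hYinv]
  abel

/-- Feasibility of the LQR LMI bounds the closed-loop quadratic cost by `x₀ᵀ Y⁻¹ x₀`. -/
theorem lqr_lmi_cost_bound {n m : ℕ}
    (A : Matrix (Fin n) (Fin n) ℝ) (Bu : Matrix (Fin n) (Fin m) ℝ)
    (Y : Matrix (Fin n) (Fin n) ℝ) (W : Matrix (Fin m) (Fin n) ℝ)
    (Q : Matrix (Fin n) (Fin n) ℝ) (R : Matrix (Fin m) (Fin m) ℝ)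
    (hY : Y.PosDef) (hQ : Q.PosSemidef) (hR : R.PosSemidef)
    (hLMI : (A * Y + Y * Aᵀ + Bu * W + Wᵀ * Buᵀ + Y * Q * Y + Wᵀ * R * W).NegDef)
    (K : Matrix (Fin m) (Fin n) ℝ) (hK : K = W * Y⁻¹)
    (Acl : Matrix (Fin n) (Fin n) ℝ) (hAcl : Acl = A + Bu * K)
    (x₀ : Fin n → ℝ) :
    IntegrableOn
      (fun t : ℝ =>
        x₀ ⬝ᵥ ((NormedSpace.exp (t • Aclᵀ) * (Q + Kᵀ * R * K) * NormedSpace.exp (t • Acl)) *ᵥ x₀))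
      (Set.Ioi 0) ∧
    (∫ t in Set.Ioi (0 : ℝ),
        x₀ ⬝ᵥ ((NormedSpace.exp (t • Aclᵀ) * (Q + Kᵀ * R * K) * NormedSpace.exp (t • Acl)) *ᵥ x₀))
      ≤ x₀ ⬝ᵥ (Y⁻¹ *ᵥ x₀) := by
  subst hK hAcl
  have hYs : Yᵀ = Y := (isHermitian_iff_isSymm.mp hY.isHermitian).eq
  have hS : (Q + (W * Y⁻¹)ᵀ * R * (W * Y⁻¹)).PosSemidef := by
    simpa only [conjTranspose_eq_transpose_of_trivial] using
      hQ.add (hR.conjTranspose_mul_mul_same (W * Y⁻¹))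
  refine integrableOn_and_setIntegral_le_of_lyapunov _ _ _ hY.inv.posSemidef hS (fun x => ?_) x₀
  have hYinvs : (Y⁻¹)ᵀ = Y⁻¹ := by rw [transpose_nonsing_inv, hYs]
  rw [← inv_mul_lmi_mul_inv A Y Q Bu W R ((isUnit_iff_isUnit_det Y).mp hY.isUnit) hYs]
  nth_rw 1 [← hYinvs]
  rw [dotProduct_transpose_mul_mul_mulVec]
  exact hLMI.dotProduct_mulVec_nonpos _
end

section
/- Let A be an n×n real Hurwitz matrix and Q a symmetric positive semidefinite n×n real matrix. Suppose X is a symmetric n×n real matrix such that A·X + X·Aᵀ + Q is negative definite, and P is the (unique) solution of the Lyapunov equation A·P + P·Aᵀ + Q = 0. Then X − P is positive definite. -/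
/-!
Put `D = X - P` and `N = A X + X Aᵀ + Q`, so that `A D + D Aᵀ = N`. For `x ≠ 0` the function
`q t = xᵀ e^{tA} D e^{tAᵀ} x` has derivative `yᵀ N y < 0`, where `y = e^{tAᵀ} x ≠ 0`, and tends
to `0` because `e^{tA} → 0` for a Hurwitz matrix; hence `xᵀ D x = q 0 > 0`. The same flow shows
that `A S + S Aᵀ = 0` forces `S = 0`; as `N` is symmetric this applies to `S = D - Dᵀ`.
The decay of `e^{tA}` is read off the generalized eigenspaces of `A` over `ℂ`, on which
`e^{tA}` acts as `e^{tμ}` times a polynomial in `t`.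
-/

open Matrix
open scoped Matrix

open NormedSpace Filter Topology Finset
open scoped Nat

theorem Complex.tendsto_ofReal_pow_mul_exp_atTop_nhds_zero {μ : ℂ} (hμ : μ.re < 0) (j : ℕ) :
    Tendsto (fun t : ℝ => (t : ℂ) ^ j * Complex.exp (t * μ)) atTop (𝓝 0) := by
  rw [tendsto_zero_iff_norm_tendsto_zero]
  have := tendsto_rpow_mul_exp_neg_mul_atTop_nhds_zero j (-μ.re) (by linarith)
  refine this.congr' ?_
  filter_upwards [eventually_ge_atTop 0] with t ht
  simp [Complex.norm_exp, abs_of_nonneg ht, mul_comm]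

namespace Matrix

variable {ι : Type*} [Fintype ι] [DecidableEq ι]

theorem exp_mulVec_eq_sum_of_pow_mulVec_eq_zero {𝕂 : Type*} [RCLike 𝕂] {N : Matrix ι ι 𝕂}
    {w : ι → 𝕂} {k : ℕ} (hN : N ^ k *ᵥ w = 0) :
    exp N *ᵥ w = ∑ j ∈ range k, (j ! : 𝕂)⁻¹ • (N ^ j *ᵥ w) := by
  have hsum : HasSum (fun j => ((j ! : 𝕂)⁻¹ • N ^ j) *ᵥ w) (exp N *ᵥ w) :=
    open scoped Norms.Operator in
    (exp_series_hasSum_exp' (𝕂 := 𝕂) N).map (mulVec.addMonoidHomLeft w)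
      (continuous_id.matrix_mulVec continuous_const)
  refine hsum.unique ?_
  simp only [smul_mulVec]
  refine hasSum_sum_of_ne_finset_zero fun j hj => ?_
  rw [mem_range, not_lt] at hj
  rw [← Nat.sub_add_cancel hj, pow_add, ← mulVec_mulVec, hN, mulVec_zero, smul_zero]

theorem exp_smul_mulVec_eq_of_pow_sub_mulVec_eq_zero {𝕂 : Type*} [RCLike 𝕂] {M : Matrix ι ι 𝕂}
    {μ : 𝕂} {w : ι → 𝕂} {k : ℕ} (h : (M - μ • 1) ^ k *ᵥ w = 0) (t : 𝕂) :
    exp (t • M) *ᵥ w =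
      exp (t * μ) • ∑ j ∈ range k, (t ^ j * (j ! : 𝕂)⁻¹) • ((M - μ • 1) ^ j *ᵥ w) := by
  have hsplit : t • M = (t * μ) • (1 : Matrix ι ι 𝕂) + t • (M - μ • 1) := by
    rw [smul_sub, smul_smul]; abel
  have hcomm : Commute ((t * μ) • (1 : Matrix ι ι 𝕂)) (t • (M - μ • 1)) :=
    ((Commute.one_left _).smul_left _).smul_right _
  have hscalar : exp ((t * μ) • (1 : Matrix ι ι 𝕂)) = exp (t * μ) • (1 : Matrix ι ι 𝕂) := by
    rw [← Algebra.algebraMap_eq_smul_one, ← Algebra.algebraMap_eq_smul_one]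
    open scoped Norms.Operator in exact (algebraMap_exp_comm (t * μ)).symm
  have hk : (t • (M - μ • 1)) ^ k *ᵥ w = 0 := by rw [smul_pow, smul_mulVec, h, smul_zero]
  rw [hsplit, exp_add_of_commute _ _ hcomm, hscalar, smul_mul_assoc, one_mul, smul_mulVec,
    exp_mulVec_eq_sum_of_pow_mulVec_eq_zero hk]
  simp only [smul_pow, smul_mulVec, smul_smul, mul_comm]

theorem mem_spectrum_of_pow_sub_mulVec_eq_zero {K : Type*} [Field K] {M : Matrix ι ι K} {μ : K}
    {w : ι → K} {k : ℕ} (h : (M - μ • 1) ^ k *ᵥ w = 0) (hw : w ≠ 0) : μ ∈ spectrum K M := by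
  by_contra hμ
  have hunit : IsUnit (M - μ • 1) := by
    simpa [← Algebra.algebraMap_eq_smul_one] using (spectrum.notMem_iff.mp hμ).neg
  exact hw (mulVec_injective_of_isUnit (hunit.pow k) (h.trans (mulVec_zero _).symm))

theorem tendsto_exp_smul_mulVec_of_pow_sub_mulVec_eq_zero {M : Matrix ι ι ℂ} {μ : ℂ}
    (hμ : μ.re < 0) {w : ι → ℂ} {k : ℕ} (h : (M - μ • 1) ^ k *ᵥ w = 0) :
    Tendsto (fun t : ℝ => exp ((t : ℂ) • M) *ᵥ w) atTop (𝓝 0) := by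
  simp_rw [exp_smul_mulVec_eq_of_pow_sub_mulVec_eq_zero h, smul_sum, smul_smul,
    ← Complex.exp_eq_exp_ℂ]
  rw [← sum_const_zero (s := range k)]
  refine tendsto_finsetSum _ fun j _ => ?_
  rw [← zero_smul ℂ ((M - μ • 1) ^ j *ᵥ w)]
  refine Tendsto.smul_const ?_ _
  have := (Complex.tendsto_ofReal_pow_mul_exp_atTop_nhds_zero hμ j).mul_const (j ! : ℂ)⁻¹
  rw [zero_mul] at this
  refine this.congr fun t => ?_
  ring

theorem tendsto_exp_smul_atTop_nhds_zero_of_forall_re_neg {M : Matrix ι ι ℂ}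
    (hM : ∀ μ ∈ spectrum ℂ M, μ.re < 0) :
    Tendsto (fun t : ℝ => exp ((t : ℂ) • M)) atTop (𝓝 0) := by
  have hmulVec (w : ι → ℂ) : Tendsto (fun t : ℝ => exp ((t : ℂ) • M) *ᵥ w) atTop (𝓝 0) := by
    have hw : w ∈ ⨆ μ, Module.End.maxGenEigenspace (toLin' M) μ := by
      rw [Module.End.iSup_maxGenEigenspace_eq_top]; trivial
    induction hw using Submodule.iSup_induction' with
    | mem μ w hw =>
      obtain ⟨k, hk⟩ := (Module.End.mem_maxGenEigenspace _ _ _).mp hw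
      have hk' : (M - μ • 1) ^ k *ᵥ w = 0 := by
        change toLinAlgEquiv' ((M - μ • 1) ^ k) w = 0
        rwa [map_pow, map_sub, map_smul, map_one]
      rcases eq_or_ne w 0 with rfl | hw0
      · simp
      exact tendsto_exp_smul_mulVec_of_pow_sub_mulVec_eq_zero
        (hM μ (mem_spectrum_of_pow_sub_mulVec_eq_zero hk' hw0)) hk'
    | zero => simp
    | add v w _ _ hv hw => simpa [mulVec_add] using hv.add hw
  refine tendsto_pi_nhds.mpr fun i => tendsto_pi_nhds.mpr fun j => ?_
  simpa [mulVec_single_one] using (tendsto_pi_nhds.mp (hmulVec (Pi.single j 1))) i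

section Differentiation

/- Differentiating matrix-valued functions needs a norm on matrices; all of them are equivalent,
so the choice is immaterial. -/
open scoped Norms.Operator

theorem hasDerivAt_exp_smul_mul_mul_exp_smul (A B C : Matrix ι ι ℝ) (t : ℝ) :
    HasDerivAt (fun t : ℝ => exp (t • A) * C * exp (t • B))
      (exp (t • A) * (A * C + C * B) * exp (t • B)) t := by
  have h := ((hasDerivAt_exp_smul_const A t).mul_const C).mul (hasDerivAt_exp_smul_const' B t)
  have hval : exp (t • A) * (A * C + C * B) * exp (t • B) =
      exp (t • A) * A * C * exp (t • B) + exp (t • A) * C * (B * exp (t • B)) := by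
    noncomm_ring
  rw [hval]
  exact h

omit [DecidableEq ι] in
theorem _root_.HasDerivAt.dotProduct_mulVec {κ : Type*} [Fintype κ] {F : ℝ → Matrix ι κ ℝ}
    {F' : Matrix ι κ ℝ} {t : ℝ} (hF : HasDerivAt F F' t) (x : ι → ℝ) (y : κ → ℝ) :
    HasDerivAt (fun t => x ⬝ᵥ (F t *ᵥ y)) (x ⬝ᵥ (F' *ᵥ y)) t :=
  (LinearMap.toContinuousLinearMap
    (dotProductBilin ℝ ℝ x ∘ₗ (mulVecBilin ℝ ℝ).flip y)).hasFDerivAt.comp_hasDerivAt t hF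

end Differentiation

theorem exp_smul_transpose (t : ℝ) (A : Matrix ι ι ℝ) : exp (t • Aᵀ) = (exp (t • A))ᵀ := by
  rw [← transpose_smul, exp_transpose]

variable {A : Matrix ι ι ℝ}

theorem tendsto_exp_smul_mul_mul_exp_smul_transpose
    (hA : Tendsto (fun t : ℝ => exp (t • A)) atTop (𝓝 0)) (C : Matrix ι ι ℝ) :
    Tendsto (fun t : ℝ => exp (t • A) * C * exp (t • Aᵀ)) atTop (𝓝 0) := by
  have hAT : Tendsto (fun t : ℝ => exp (t • Aᵀ)) atTop (𝓝 0) := by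
    simp_rw [exp_smul_transpose]
    simpa [Function.comp_def] using (continuous_id.matrix_transpose.tendsto 0).comp hA
  simpa using (hA.mul_const C).mul hAT

theorem eq_zero_of_mul_add_mul_transpose_eq_zero
    (hA : Tendsto (fun t : ℝ => exp (t • A)) atTop (𝓝 0)) {S : Matrix ι ι ℝ}
    (hS : A * S + S * Aᵀ = 0) : S = 0 := by
  have hderiv (t : ℝ) := hasDerivAt_exp_smul_mul_mul_exp_smul A Aᵀ S t
  simp only [hS, mul_zero, zero_mul] at hderiv
  have hconst (t : ℝ) : exp (t • A) * S * exp (t • Aᵀ) = S := by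
    simpa using open scoped Norms.Operator in
      is_const_of_deriv_eq_zero (fun u => (hderiv u).differentiableAt) (fun u => (hderiv u).deriv)
        t 0
  exact tendsto_const_nhds_iff.mp ((tendsto_exp_smul_mul_mul_exp_smul_transpose hA S).congr hconst)

theorem posDef_of_negDef_mul_add_mul_transpose
    (hA : Tendsto (fun t : ℝ => exp (t • A)) atTop (𝓝 0)) {D : Matrix ι ι ℝ}
    (hD : (A * D + D * Aᵀ).NegDef) : D.PosDef := by
  have hsymm : Dᵀ = D := by
    have hskew : A * (D - Dᵀ) + (D - Dᵀ) * Aᵀ = (A * D + D * Aᵀ) - (A * D + D * Aᵀ)ᵀ := by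
      simp only [transpose_add, transpose_mul, transpose_transpose]
      noncomm_ring
    rw [hD.1.eq, sub_self] at hskew
    exact (sub_eq_zero.mp (eq_zero_of_mul_add_mul_transpose_eq_zero hA hskew)).symm
  refine posDef_iff_dotProduct_mulVec.mpr ⟨?_, fun x hx => ?_⟩
  · rw [IsHermitian, conjTranspose_eq_transpose_of_trivial, hsymm]
  have hconj (E M : Matrix ι ι ℝ) : x ⬝ᵥ ((E * M * Eᵀ) *ᵥ x) = (Eᵀ *ᵥ x) ⬝ᵥ (M *ᵥ (Eᵀ *ᵥ x)) := by
    rw [mul_assoc, ← mulVec_mulVec, dotProduct_mulVec, ← mulVec_transpose, ← mulVec_mulVec]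
  let q : ℝ → ℝ := fun t => x ⬝ᵥ ((exp (t • A) * D * exp (t • Aᵀ)) *ᵥ x)
  have hq_anti : StrictAnti q := by
    refine strictAnti_of_hasDerivAt_neg
      (fun t => (hasDerivAt_exp_smul_mul_mul_exp_smul A Aᵀ D t).dotProduct_mulVec x x) fun t => ?_
    rw [exp_smul_transpose, hconj]
    have hunit : IsUnit (exp (t • A))ᵀ := (isUnit_transpose _).mpr (Matrix.isUnit_exp (t • A))
    refine hD.2 _ fun h0 => hx (mulVec_injective_of_isUnit hunit ?_)
    rw [h0, mulVec_zero]
  have hq_lim : Tendsto q atTop (𝓝 0) := by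
    have hcont : Continuous fun M : Matrix ι ι ℝ => x ⬝ᵥ (M *ᵥ x) :=
      continuous_const.dotProduct (continuous_id.matrix_mulVec continuous_const)
    simpa [q, Function.comp_def] using
      (hcont.tendsto 0).comp (tendsto_exp_smul_mul_mul_exp_smul_transpose hA D)
  calc 0 ≤ q 1 := le_of_tendsto hq_lim (eventually_atTop.mpr ⟨1, fun t ht => hq_anti.antitone ht⟩)
    _ < q 0 := hq_anti zero_lt_one
    _ = star x ⬝ᵥ (D *ᵥ x) := by simp [q]

end Matrix

theorem IsHurwitz.tendsto_exp_smul_atTop_nhds_zero {n : ℕ} {A : Matrix (Fin n) (Fin n) ℝ}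
    (hA : IsHurwitz A) : Tendsto (fun t : ℝ => exp (t • A)) atTop (𝓝 0) := by
  have hmap (t : ℝ) : (exp (t • A)).map Complex.ofReal = exp ((t : ℂ) • A.map Complex.ofReal) := by
    have hsmul : (t • A).map Complex.ofReal = (t : ℂ) • A.map Complex.ofReal := by ext; simp
    rw [← hsmul]
    exact open scoped Norms.Operator in
      map_exp (Complex.ofRealHom.mapMatrix : Matrix (Fin n) (Fin n) ℝ →+* _)
        (by exact continuous_id.matrix_map Complex.continuous_ofReal) (t • A)
  have hre : Continuous fun M : Matrix (Fin n) (Fin n) ℂ => M.map Complex.re :=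
    continuous_id.matrix_map Complex.continuous_re
  have := (hre.tendsto 0).comp (tendsto_exp_smul_atTop_nhds_zero_of_forall_re_neg hA)
  simp only [Function.comp_def, ← hmap] at this
  simpa [Function.comp_def] using this

theorem lmi_certificate_dominates_gramian_general {n : ℕ}
    (A Q X P : Matrix (Fin n) (Fin n) ℝ)
    (hA : IsHurwitz A)
    (hLMI : (A * X + X * Aᵀ + Q).NegDef)
    (hP : A * P + P * Aᵀ + Q = 0) :
    (X - P).PosDef := by
  have hdiff : A * (X - P) + (X - P) * Aᵀ = A * X + X * Aᵀ + Q := by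
    rw [← sub_zero (A * X + X * Aᵀ + Q), ← hP]
    noncomm_ring
  exact posDef_of_negDef_mul_add_mul_transpose hA.tendsto_exp_smul_atTop_nhds_zero (hdiff ▸ hLMI)

/-- Any strict Lyapunov LMI certificate `X` dominates the Gramian `P`. -/
theorem lmi_certificate_dominates_gramian {n : ℕ}
    (A Q X P : Matrix (Fin n) (Fin n) ℝ)
    (hA : IsHurwitz A) (hQ : Q.PosSemidef) (hX : X.IsSymm)
    (hLMI : (A * X + X * Aᵀ + Q).NegDef)
    (hP : A * P + P * Aᵀ + Q = 0) :
    (X - P).PosDef :=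
  lmi_certificate_dominates_gramian_general A Q X P hA hLMI hP
end
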